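/- arXiv:2507.20201 — 4 statements merged into one kernel-verified Lean document; each statement's English description precedes it below -/
import Mathlib

section
/- Let P ⊆ ℤ² be finite with connected induced subgraph, p ∈ P, and v ∉ P a vertex adjacent to p. If every vertex of N(p) (occupied neighbours of p) is connected to v within the induced subgraph on ((P ∖ {p}) ∩ (N(p) ∪ neighbours of v)) ∪ {v}, then the induced subgraph on (P ∖ {p}) ∪ {v} is connected. -/
/-- The six direction vectors of the triangular grid. -/
def dirs : Finset (ℤ × ℤ) := {(1,0), (-1,0), (0,1), (0,-1), (1,-1), (-1,1)}

/-- The infinite triangular grid on `ℤ²`. -/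
def triGrid : SimpleGraph (ℤ × ℤ) :=
  SimpleGraph.fromRel (fun v w => (w.1 - v.1, w.2 - v.2) ∈ dirs)

/-!
Every occupied `x ≠ p` is joined to `p` by a walk inside `P`; the part of that walk before it
first reaches `p` avoids `p` and ends at an occupied neighbour `q` of `p`, and by hypothesis `q`
reaches `v` inside the local region. So every node of `(P \ {p}) ∪ {v}` reaches `v`.
-/

namespace SimpleGraph

variable {V : Type*} {G : SimpleGraph V}

lemma Reachable.induce_mono {s t : Set V} (hst : s ⊆ t) {a b : s}
    (h : (G.induce s).Reachable a b) :
    (G.induce t).Reachable (Set.inclusion hst a) (Set.inclusion hst b) :=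
  h.map (G.induceHomOfLE hst).toHom

lemma Walk.exists_adj_reachable_induce_diff {P : Set V} {p x : V} (W : G.Walk x p)
    (hW : ∀ y ∈ W.support, y ∈ P) (hx : x ≠ p) :
    ∃ q, ∃ hq : q ∈ P \ {p}, G.Adj p q ∧
      (G.induce (P \ {p})).Reachable ⟨x, hW x W.start_mem_support, hx⟩ ⟨q, hq⟩ := by
  induction W with
  | nil => exact absurd rfl hx
  | @cons x y p hxy rest ih =>
    have hxP : x ∈ P := hW x (by simp)
    by_cases hy : y = p
    · subst hy
      exact ⟨x, ⟨hxP, hx⟩, hxy.symm, .rfl⟩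
    · obtain ⟨q, hq, hpq, hyq⟩ := ih (fun z hz => hW z (by simp [hz])) hy
      have hxy' : (G.induce (P \ {p})).Adj ⟨x, hxP, hx⟩ ⟨y, hW y (by simp), hy⟩ := hxy
      exact ⟨q, hq, hpq, hxy'.reachable.trans hyq⟩

lemma exists_adj_reachable_induce_diff {P : Set V} {p x : V} (hP : (G.induce P).Connected)
    (hp : p ∈ P) (hxP : x ∈ P) (hx : x ≠ p) :
    ∃ q, ∃ hq : q ∈ P \ {p}, G.Adj p q ∧
      (G.induce (P \ {p})).Reachable ⟨x, hxP, hx⟩ ⟨q, hq⟩ := by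
  obtain ⟨W⟩ := hP.preconnected ⟨x, hxP⟩ ⟨p, hp⟩
  exact (W.map (Embedding.induce P).toHom).exists_adj_reachable_induce_diff
    (fun y hy => by
      obtain ⟨z, -, rfl⟩ := List.mem_map.1 (Walk.support_map _ W ▸ hy)
      exact z.2) hx

theorem connected_induce_diff_union_singleton {P L : Set V} {p v : V}
    (hP : (G.induce P).Connected) (hp : p ∈ P)
    (hLsub : L ⊆ (P \ {p}) ∪ {v}) (hvL : v ∈ L) (hNL : ∀ q ∈ P \ {p}, G.Adj p q → q ∈ L)
    (hreach : ∀ q (hq : q ∈ L), q ∈ P → G.Adj p q → (G.induce L).Reachable ⟨q, hq⟩ ⟨v, hvL⟩) :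
    (G.induce ((P \ {p}) ∪ {v})).Connected := by
  refine connected_iff_exists_forall_reachable _ |>.2 ⟨⟨v, .inr rfl⟩, ?_⟩
  rintro ⟨x, hx | rfl⟩
  · obtain ⟨q, hq, hpq, hxq⟩ := exists_adj_reachable_induce_diff hP hp hx.1 hx.2
    have hqv := (hreach q (hNL q hq hpq) hq.1 hpq).induce_mono hLsub
    exact ((hxq.induce_mono (Set.subset_union_left (t := {v}))).trans hqv).symm
  · exact .rfl

end SimpleGraph

/-- A contracted particle moving from `p` to an adjacent empty node `v` preserves global
connectivity provided every occupied neighbour of `p` is connected to `v` inside the local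
region `((P \ {p}) ∩ (N(p) ∪ N(v))) ∪ {v}`. -/
theorem move_keeps_connected (P : Set (ℤ × ℤ))
    (hconn : (triGrid.induce P).Connected) (p : ℤ × ℤ) (hp : p ∈ P)
    (v : ℤ × ℤ)
    (hreach : ∀ q (hq : q ∈ ((P \ {p}) ∩ (triGrid.neighborSet p ∪ triGrid.neighborSet v)) ∪ {v}),
      q ∈ P → triGrid.Adj p q →
      (triGrid.induce (((P \ {p}) ∩ (triGrid.neighborSet p ∪ triGrid.neighborSet v)) ∪ {v})).Reachable
        ⟨q, hq⟩ ⟨v, by simp⟩) :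
    (triGrid.induce ((P \ {p}) ∪ {v})).Connected :=
  triGrid.connected_induce_diff_union_singleton hconn hp
    (Set.union_subset_union_left _ Set.inter_subset_left) (.inr rfl)
    (fun q hq hpq => .inl ⟨hq, .inl hpq⟩) hreach
end

section
/- Let P ⊆ ℤ² be a finite nonempty set of contracted particles in the triangular grid such that every p ∈ P has either zero or two occupied lower neighbours (the lower neighbours of (x,y) being (x,y-1) and (x+1,y-1), with 'lower' meaning smaller second coordinate), and the induced subgraph on P is connected. Then there exists exactly one p ∈ P such that the nodes in directions 0, 1, 2 and 5 of p (i.e., p+(1,0), p+(1,-1), p+(0,-1), p+(0,1) in suitable coordinates) are all unoccupied. -/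
/-- The two lower neighbours of a vertex in axial coordinates. -/
def lowNbr1 (p : ℤ × ℤ) : ℤ × ℤ := (p.1, p.2 - 1)
def lowNbr2 (p : ℤ × ℤ) : ℤ × ℤ := (p.1 + 1, p.2 - 1)

/-- Every particle has either zero or two occupied lower neighbours. -/
def ZeroOrTwoLower (P : Set (ℤ × ℤ)) : Prop :=
  ∀ p ∈ P, (lowNbr1 p ∈ P ∧ lowNbr2 p ∈ P) ∨ (lowNbr1 p ∉ P ∧ lowNbr2 p ∉ P)

/-- A leader: a particle with no occupied neighbour in directions 0, 1, 2 and 5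
(direction 0 = `(1,0)`, direction 1 = `(1,-1)`, direction 2 = `(0,-1)`, and direction 5
is the upper neighbour `(0,1)` whose other lower neighbour is the direction-0 node). -/
def IsLeader (P : Set (ℤ × ℤ)) (p : ℤ × ℤ) : Prop :=
  p ∈ P ∧ (p.1 + 1, p.2) ∉ P ∧ (p.1 + 1, p.2 - 1) ∉ P ∧
    (p.1, p.2 - 1) ∉ P ∧ (p.1, p.2 + 1) ∉ P

/-!
Induct on the number of particles and delete the rightmost particle `q` of the top row. No
particle rests on `q`, so the rest still has zero or two lower neighbours; and the rest stays
connected, since the neighbours of `q` lie among its west, south and south-east nodes, and the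
south node, when occupied, is adjacent to the other two. If `q` rests on two particles, it is
not a leader and its presence does not disqualify the leader of `P \ {q}`. If it rests on none,
`q` is a leader, its west node is its only possible neighbour, and that neighbour is the leader
of `P \ {q}` but is disqualified in `P` by `q` itself.
-/

namespace SimpleGraph

variable {V : Type*} {G : SimpleGraph V} {P : Set V} {q : V}

/-- Retracting `q` onto `c` maps every edge of `G.induce P` to an edge or a vertex of
`G.induce (P \ {q})`, so walks survive the deletion of `q`. -/
lemma Connected.induce_sdiff_singleton (hconn : (G.induce P).Connected) {c : V} (hc : c ∈ P)
    (hcq : c ≠ q) (hnbr : ∀ a ∈ P, G.Adj a q → a = c ∨ G.Adj a c) :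
    (G.induce (P \ {q})).Connected := by
  classical
  have hc' : c ∈ P \ {q} := ⟨hc, hcq⟩
  let f : P → ↥(P \ {q}) := fun x => if hx : (x : V) = q then ⟨c, hc'⟩ else ⟨x, x.2, hx⟩
  have hnbr' : ∀ (y : P) (hy : (y : V) ≠ q), G.Adj y q →
      (G.induce (P \ {q})).Reachable ⟨c, hc'⟩ ⟨y, y.2, hy⟩ := fun y hy hyq => by
    rcases hnbr y y.2 hyq with rfl | hyc
    · rfl
    · exact Adj.reachable (G := G.induce (P \ {q})) hyc.symm
  have hf : ∀ x y, (G.induce P).Adj x y → (G.induce (P \ {q})).Reachable (f x) (f y) := by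
    rintro x y (hxy : G.Adj x y)
    by_cases hx : (x : V) = q <;> by_cases hy : (y : V) = q <;> simp only [f, hx, hy, dite_true,
      dite_false]
    · exact (G.irrefl (hx ▸ hy ▸ hxy)).elim
    · exact hnbr' y hy (hx ▸ hxy.symm)
    · exact (hnbr' x hx (hy ▸ hxy)).symm
    · exact Adj.reachable (G := G.induce (P \ {q})) hxy
  refine (connected_iff _).2 ⟨fun u v => ?_, ⟨⟨c, hc'⟩⟩⟩
  have huv := (reachable_iff_reflTransGen _ _).1 (hconn.preconnected ⟨u, u.2.1⟩ ⟨v, v.2.1⟩)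
  have hlift := Relation.ReflTransGen.lift' f
    (fun x y hxy => (reachable_iff_reflTransGen _ _).1 (hf x y hxy)) _ _ huv
  have hf_of_ne : ∀ x : ↥(P \ {q}), f ⟨x, x.2.1⟩ = x := fun x => dif_neg x.2.2
  rwa [Function.onFun, hf_of_ne, hf_of_ne, ← reachable_iff_reflTransGen] at hlift

lemma Connected.eq_singleton_of_forall_not_adj (hconn : (G.induce P).Connected) (hq : q ∈ P)
    (hnadj : ∀ a ∈ P, ¬ G.Adj q a) : P = {q} := by
  refine Set.eq_singleton_iff_unique_mem.2 ⟨hq, fun s hs => ?_⟩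
  obtain ⟨w⟩ := hconn.preconnected ⟨q, hq⟩ ⟨s, hs⟩
  cases w with
  | nil => rfl
  | cons h _ => exact (hnadj _ (Subtype.prop _) h).elim

end SimpleGraph

lemma triGrid_adj_iff (a b : ℤ × ℤ) : triGrid.Adj a b ↔
    b = (a.1 + 1, a.2) ∨ b = (a.1 - 1, a.2) ∨ b = (a.1, a.2 + 1) ∨ b = (a.1, a.2 - 1) ∨
      b = (a.1 + 1, a.2 - 1) ∨ b = (a.1 - 1, a.2 + 1) := by
  simp [triGrid, dirs, SimpleGraph.fromRel_adj, Prod.ext_iff]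
  omega

lemma ZeroOrTwoLower.sdiff_singleton {P : Set (ℤ × ℤ)} {q : ℤ × ℤ} (hzt : ZeroOrTwoLower P)
    (hq : ∀ a ∈ P, a.2 ≤ q.2) : ZeroOrTwoLower (P \ {q}) := by
  intro p hp
  have hrow := hq p hp.1
  have h1 : lowNbr1 p ≠ q := fun h => by simp [lowNbr1, ← h] at hrow
  have h2 : lowNbr2 p ≠ q := fun h => by simp [lowNbr2, ← h] at hrow
  simp only [Set.mem_sdiff, Set.mem_singleton_iff, h1, h2, not_false_eq_true, and_true]
  exact hzt p hp.1

namespace IsLeader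

variable {P : Set (ℤ × ℤ)} {p q : ℤ × ℤ}

lemma sdiff_singleton (hp : IsLeader P p) (hpq : p ≠ q) : IsLeader (P \ {q}) p :=
  ⟨⟨hp.1, hpq⟩, fun h => hp.2.1 h.1, fun h => hp.2.2.1 h.1, fun h => hp.2.2.2.1 h.1,
    fun h => hp.2.2.2.2 h.1⟩

lemma of_sdiff_singleton (hp : IsLeader (P \ {q}) p)
    (hq : q ∉ ({(p.1 + 1, p.2), (p.1 + 1, p.2 - 1), (p.1, p.2 - 1), (p.1, p.2 + 1)} :
      Set (ℤ × ℤ))) : IsLeader P p := by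
  simp only [Set.mem_insert_iff, Set.mem_singleton_iff, not_or] at hq
  exact ⟨hp.1.1, fun h => hp.2.1 ⟨h, Ne.symm hq.1⟩, fun h => hp.2.2.1 ⟨h, Ne.symm hq.2.1⟩,
    fun h => hp.2.2.2.1 ⟨h, Ne.symm hq.2.2.1⟩, fun h => hp.2.2.2.2 ⟨h, Ne.symm hq.2.2.2⟩⟩

end IsLeader

def IsTopRight (P : Set (ℤ × ℤ)) (q : ℤ × ℤ) : Prop :=
  q ∈ P ∧ ∀ a ∈ P, a.2 < q.2 ∨ (a.2 = q.2 ∧ a.1 ≤ q.1)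

lemma exists_isTopRight {P : Set (ℤ × ℤ)} (hfin : P.Finite) (hne : P.Nonempty) :
    ∃ q, IsTopRight P q := by
  obtain ⟨q, hq, hmax⟩ := hfin.toFinset.exists_max_image (fun a => toLex (a.2, a.1))
    (hfin.toFinset_nonempty.2 hne)
  refine ⟨q, hfin.mem_toFinset.1 hq, fun a ha => ?_⟩
  simpa [Prod.Lex.toLex_le_toLex] using hmax a (hfin.mem_toFinset.2 ha)

namespace IsTopRight

variable {P : Set (ℤ × ℤ)} {q : ℤ × ℤ}

lemma snd_le (hq : IsTopRight P q) {a : ℤ × ℤ} (ha : a ∈ P) : a.2 ≤ q.2 := by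
  rcases hq.2 a ha with h | h <;> omega

lemma notMem_of_snd_lt (hq : IsTopRight P q) {a : ℤ × ℤ} (ha : q.2 < a.2) : a ∉ P :=
  fun h => by have := hq.snd_le h; omega

lemma right_notMem (hq : IsTopRight P q) : (q.1 + 1, q.2) ∉ P := fun h => by
  rcases hq.2 _ h with h | h <;> simp at h

lemma eq_of_adj (hq : IsTopRight P q) {a : ℤ × ℤ} (ha : a ∈ P) (hadj : triGrid.Adj q a) :
    a = (q.1 - 1, q.2) ∨ a = lowNbr1 q ∨ a = lowNbr2 q := by
  rcases (triGrid_adj_iff q a).1 hadj with rfl | rfl | rfl | rfl | rfl | rfl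
  · exact absurd ha hq.right_notMem
  · exact Or.inl rfl
  · exact absurd ha (hq.notMem_of_snd_lt (by simp))
  · exact Or.inr (Or.inl rfl)
  · exact Or.inr (Or.inr rfl)
  · exact absurd ha (hq.notMem_of_snd_lt (by simp))

lemma isLeader (hq : IsTopRight P q) (h1 : lowNbr1 q ∉ P) (h2 : lowNbr2 q ∉ P) :
    IsLeader P q :=
  ⟨hq.1, hq.right_notMem, h2, h1, hq.notMem_of_snd_lt (by simp)⟩

lemma existsUnique_isLeader_of_lowNbr_mem (hq : IsTopRight P q) (h1 : lowNbr1 q ∈ P)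
    (h2 : lowNbr2 q ∈ P) (h : ∃! p, IsLeader (P \ {q}) p) : ∃! p, IsLeader P p := by
  obtain ⟨L, hL, huniq⟩ := h
  have h1' : lowNbr1 q ∈ P \ {q} := ⟨h1, by simp [lowNbr1, Prod.ext_iff]⟩
  have h2' : lowNbr2 q ∈ P \ {q} := ⟨h2, by simp [lowNbr2, Prod.ext_iff]⟩
  have hrow := hq.snd_le hL.1.1
  refine ⟨L, hL.of_sdiff_singleton ?_, fun p hp => huniq p (hp.sdiff_singleton ?_)⟩
  · simp only [Set.mem_insert_iff, Set.mem_singleton_iff]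
    rintro (rfl | h | h | rfl)
    · exact hL.2.2.1 h1'
    · simp [Prod.ext_iff] at h; omega
    · simp [Prod.ext_iff] at h; omega
    · exact hL.2.1 (by simpa [lowNbr2] using h2')
  · rintro rfl
    exact hp.2.2.2.1 h1

lemma existsUnique_isLeader_of_lowNbr_notMem (hq : IsTopRight P q) (hzt : ZeroOrTwoLower P)
    (h1 : lowNbr1 q ∉ P) (h2 : lowNbr2 q ∉ P) (hW : (q.1 - 1, q.2) ∈ P)
    (h : ∃! p, IsLeader (P \ {q}) p) : ∃! p, IsLeader P p := by
  have hWq : (q.1 - 1, q.2) ≠ q := by simp [Prod.ext_iff]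
  have hWlead : IsLeader (P \ {q}) (q.1 - 1, q.2) := by
    have hWlow : lowNbr1 (q.1 - 1, q.2) ∉ P := by
      rcases hzt _ hW with ⟨-, h⟩ | ⟨h, -⟩
      · exact absurd (by simpa [lowNbr1, lowNbr2] using h) h1
      · exact h
    refine ⟨⟨hW, hWq⟩, ?_, fun h => h1 ?_, fun h => hWlow h.1, fun h => ?_⟩
    · simp
    · simpa [lowNbr1] using h.1
    · exact hq.notMem_of_snd_lt (by simp) h.1
  refine ⟨q, hq.isLeader h1 h2, fun p hp => ?_⟩
  by_contra hpq
  have hpW : p = (q.1 - 1, q.2) := h.unique (hp.sdiff_singleton hpq) hWlead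
  exact hp.2.1 (by simpa [hpW] using hq.1)

end IsTopRight

/-- A final configuration contains exactly one leader. -/
theorem unique_leader (P : Set (ℤ × ℤ)) (hfin : P.Finite) (hne : P.Nonempty)
    (hzt : ZeroOrTwoLower P) (hconn : (triGrid.induce P).Connected) :
    ∃! p, IsLeader P p := by
  induction hn : P.ncard using Nat.strong_induction_on generalizing P with
  | _ n ih =>
  obtain ⟨q, hq⟩ := exists_isTopRight hfin hne
  have hrest : ∀ c ∈ P, c ≠ q → (∀ a ∈ P, triGrid.Adj a q → a = c ∨ triGrid.Adj a c) →
      ∃! p, IsLeader (P \ {q}) p := fun c hc hcq hnbr =>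
    ih _ (hn ▸ Set.ncard_sdiff_singleton_lt_of_mem hq.1 hfin) _ hfin.sdiff ⟨c, hc, hcq⟩
      (hzt.sdiff_singleton fun _ => hq.snd_le) (hconn.induce_sdiff_singleton hc hcq hnbr) rfl
  rcases hzt q hq.1 with ⟨h1, h2⟩ | ⟨h1, h2⟩
  · refine hq.existsUnique_isLeader_of_lowNbr_mem h1 h2
      (hrest _ h1 (by simp [lowNbr1, Prod.ext_iff]) fun a ha haq => ?_)
    rcases hq.eq_of_adj ha haq.symm with rfl | rfl | rfl <;>
      simp [lowNbr1, lowNbr2, triGrid_adj_iff]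
  · by_cases hW : (q.1 - 1, q.2) ∈ P
    · refine hq.existsUnique_isLeader_of_lowNbr_notMem hzt h1 h2 hW
        (hrest _ hW (by simp [Prod.ext_iff]) fun a ha haq => Or.inl ?_)
      rcases hq.eq_of_adj ha haq.symm with rfl | rfl | rfl <;> trivial
    · have hP : P = {q} := hconn.eq_singleton_of_forall_not_adj hq.1 fun a ha hqa => by
        rcases hq.eq_of_adj ha hqa with rfl | rfl | rfl <;> contradiction
      exact ⟨q, hq.isLeader h1 h2, fun p hp => by simpa [hP] using hp.1⟩
end

section
/- Let P ⊆ ℤ² be a finite nonempty connected configuration in the triangular grid (axial coordinates, six-neighbour adjacency) in which every particle has either zero or two occupied lower neighbours. Let p be the rightmost particle in the lowest occupied row. Then p has no occupied neighbour in directions 0, 1, 2 or 5; i.e., p is a leader. -/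
theorem ZeroOrTwoLower.lowNbr2_mem {P : Set (ℤ × ℤ)} (h : ZeroOrTwoLower P) {q : ℤ × ℤ}
    (hq : q ∈ P) (h1 : lowNbr1 q ∈ P) : lowNbr2 q ∈ P := by
  rcases h q hq with ⟨-, h2⟩ | ⟨h1', -⟩
  · exact h2
  · exact absurd h1 h1'

theorem lowest_rightmost_is_leader_general (P : Set (ℤ × ℤ))
    (hzt : ZeroOrTwoLower P)
    (p : ℤ × ℤ) (hp : p ∈ P) (hlow : ∀ q ∈ P, p.2 ≤ q.2)
    (hright : ∀ q ∈ P, q.2 = p.2 → q.1 ≤ p.1) :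
    IsLeader P p := by
  have h_right : (p.1 + 1, p.2) ∉ P := fun h => by
    have := hright _ h rfl; omega
  have h_below : ∀ x, (x, p.2 - 1) ∉ P := fun x h => by
    have := hlow _ h; omega
  -- the particle above `p` would have `p` as a lower neighbour, hence also `(p.1 + 1, p.2)`
  have h_above : (p.1, p.2 + 1) ∉ P := fun h =>
    h_right (by simpa [lowNbr2] using hzt.lowNbr2_mem h (by simpa [lowNbr1] using hp))
  exact ⟨hp, h_right, h_below _, h_below _, h_above⟩

/-- The rightmost particle in the lowest occupied row of a final configuration is a leader. -/
theorem lowest_rightmost_is_leader (P : Set (ℤ × ℤ)) (hfin : P.Finite) (hne : P.Nonempty)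
    (hzt : ZeroOrTwoLower P) (hconn : (triGrid.induce P).Connected)
    (p : ℤ × ℤ) (hp : p ∈ P) (hlow : ∀ q ∈ P, p.2 ≤ q.2)
    (hright : ∀ q ∈ P, q.2 = p.2 → q.1 ≤ p.1) :
    IsLeader P p :=
  lowest_rightmost_is_leader_general P hzt p hp hlow hright
end

section
/- Let P ⊆ ℤ² be a finite connected configuration in the triangular grid in which every particle has either zero or two occupied lower neighbours. Then no two distinct particles can both be leaders, where a leader is a particle with no occupied neighbour in directions 0, 1, 2 and 5. -/
/-!
Induct on the number of particles and delete the top-left particle `r` (leftmost in the top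
row). No particle lies above `r`, so the zero-or-two property survives; the remaining
neighbours of `r` are its eastern and lower ones, which stay connected to each other, so
connectivity survives; leaders other than `r` remain leaders. If `r` is itself a leader it has
no neighbour at all, so connectivity forces `P = {r}`.
-/

lemma triGrid_adj_iff_s7 {v w : ℤ × ℤ} :
    triGrid.Adj v w ↔ w = (v.1 + 1, v.2) ∨ w = (v.1 - 1, v.2) ∨ w = (v.1, v.2 + 1) ∨
      w = (v.1, v.2 - 1) ∨ w = (v.1 + 1, v.2 - 1) ∨ w = (v.1 - 1, v.2 + 1) := by
  obtain ⟨a, b⟩ := v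
  obtain ⟨c, d⟩ := w
  simp only [triGrid, SimpleGraph.fromRel_adj, dirs, Finset.mem_insert, Finset.mem_singleton,
    Prod.ext_iff, ne_eq]
  omega

namespace SimpleGraph

variable {V : Type*} {G : SimpleGraph V} {S : Set V}

lemma Connected.eq_of_forall_not_adj (hconn : (G.induce S).Connected) {z w : V} (hz : z ∈ S)
    (hw : w ∈ S) (hiso : ∀ u ∈ S, ¬ G.Adj z u) : w = z := by
  by_contra hne
  obtain ⟨p⟩ := hconn.preconnected ⟨z, hz⟩ ⟨w, hw⟩
  have hnil : ¬ p.Nil := fun h => hne (congrArg Subtype.val h.eq).symm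
  exact hiso _ p.snd.2 (by simpa using p.adj_snd hnil)

variable {r : V}

/-- Strengthened to walks starting at `r` so that a step through `r` can be bypassed with
`hnbr`. -/
lemma Walk.reachable_induce_diff_singleton
    (hnbr : ∀ a b (ha : a ∈ S \ {r}) (hb : b ∈ S \ {r}), G.Adj r a → G.Adj r b →
      (G.induce (S \ {r})).Reachable ⟨a, ha⟩ ⟨b, hb⟩)
    {u v : S} (p : (G.induce S).Walk u v) (hv : v.1 ∈ S \ {r}) (a : V) (ha : a ∈ S \ {r})
    (hau : a = u.1 ∨ (u.1 = r ∧ G.Adj r a)) :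
    (G.induce (S \ {r})).Reachable ⟨a, ha⟩ ⟨v, hv⟩ := by
  induction p generalizing a with
  | nil =>
    rcases hau with rfl | ⟨hur, -⟩
    · rfl
    · exact absurd hur hv.2
  | @cons u x v hux p ih =>
    have hux : G.Adj u.1 x.1 := by simpa using hux
    rcases hau with rfl | ⟨hur, hra⟩
    · by_cases hxr : x.1 = r
      · exact ih hv u ha (Or.inr ⟨hxr, hxr ▸ hux.symm⟩)
      · have hx : x.1 ∈ S \ {r} := ⟨x.2, hxr⟩
        exact (show (G.induce (S \ {r})).Adj ⟨u, ha⟩ ⟨x, hx⟩ by simpa using hux).reachable.trans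
          (ih hv x hx (Or.inl rfl))
    · have hx : x.1 ∈ S \ {r} := ⟨x.2, hur ▸ hux.ne'⟩
      exact (hnbr a x ha hx hra (hur ▸ hux)).trans (ih hv x hx (Or.inl rfl))

lemma Connected.induce_diff_singleton (hconn : (G.induce S).Connected) (hne : (S \ {r}).Nonempty)
    (hnbr : ∀ a b (ha : a ∈ S \ {r}) (hb : b ∈ S \ {r}), G.Adj r a → G.Adj r b →
      (G.induce (S \ {r})).Reachable ⟨a, ha⟩ ⟨b, hb⟩) :
    (G.induce (S \ {r})).Connected := by
  have : Nonempty (S \ {r} : Set V) := hne.to_subtype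
  refine Connected.mk fun ⟨a, ha⟩ ⟨b, hb⟩ => ?_
  obtain ⟨p⟩ := hconn.preconnected ⟨a, ha.1⟩ ⟨b, hb.1⟩
  exact p.reachable_induce_diff_singleton hnbr hb a ha (Or.inl rfl)

end SimpleGraph

/-- `(r.1, r.2 + 1)` and `(r.1 - 1, r.2 + 1)` are the two sites having `r` as a lower
neighbour. -/
def IsTopLeft (P : Set (ℤ × ℤ)) (r : ℤ × ℤ) : Prop :=
  r ∈ P ∧ (r.1 - 1, r.2) ∉ P ∧ (r.1, r.2 + 1) ∉ P ∧ (r.1 - 1, r.2 + 1) ∉ P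

lemma Set.Finite.exists_isTopLeft {P : Set (ℤ × ℤ)} (hfin : P.Finite) (hne : P.Nonempty) :
    ∃ r, IsTopLeft P r := by
  obtain ⟨r, hr, hmax⟩ := P.exists_max_image (fun v => toLex (v.2, -v.1)) hfin hne
  refine ⟨r, hr, fun h => ?_, fun h => ?_, fun h => ?_⟩ <;>
    have := hmax _ h <;> simp only [Prod.Lex.toLex_le_toLex] at this <;> omega

lemma IsLeader.of_subset {P Q : Set (ℤ × ℤ)} {p : ℤ × ℤ} (h : IsLeader P p) (hQP : Q ⊆ P)
    (hp : p ∈ Q) : IsLeader Q p :=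
  ⟨hp, fun h' => h.2.1 (hQP h'), fun h' => h.2.2.1 (hQP h'), fun h' => h.2.2.2.1 (hQP h'),
    fun h' => h.2.2.2.2 (hQP h')⟩

namespace IsTopLeft

variable {P : Set (ℤ × ℤ)} {r : ℤ × ℤ}

lemma not_adj_of_isLeader (hr : IsTopLeft P r) (hlead : IsLeader P r) :
    ∀ u ∈ P, ¬ triGrid.Adj r u := by
  intro u hu hadj
  obtain ⟨-, hE, hSE, hS, hN⟩ := hlead
  obtain ⟨-, hW, -, hNW⟩ := hr
  rcases triGrid_adj_iff_s7.mp hadj with rfl | rfl | rfl | rfl | rfl | rfl <;> contradiction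

lemma zeroOrTwoLower_diff (hr : IsTopLeft P r) (hzt : ZeroOrTwoLower P) :
    ZeroOrTwoLower (P \ {r}) := by
  rintro u ⟨hu, -⟩
  have h1 : lowNbr1 u ≠ r := by
    rintro rfl
    exact hr.2.2.1 (by simpa [lowNbr1] using hu)
  have h2 : lowNbr2 u ≠ r := by
    rintro rfl
    exact hr.2.2.2 (by simpa [lowNbr2] using hu)
  rcases hzt u hu with ⟨l1, l2⟩ | ⟨l1, l2⟩
  · exact Or.inl ⟨⟨l1, h1⟩, ⟨l2, h2⟩⟩
  · exact Or.inr ⟨fun h => l1 h.1, fun h => l2 h.1⟩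

/-- The lower neighbours of `r` are both present or both absent; when present, every neighbour
of `r` is `lowNbr2 r` or adjacent to it. -/
lemma connected_diff (hr : IsTopLeft P r) (hzt : ZeroOrTwoLower P)
    (hconn : (triGrid.induce P).Connected) (hne : (P \ {r}).Nonempty) :
    (triGrid.induce (P \ {r})).Connected := by
  refine hconn.induce_diff_singleton hne fun a b ha hb hra hrb => ?_
  have nbr : ∀ c ∈ P \ {r}, triGrid.Adj r c →
      c = (r.1 + 1, r.2) ∨ c = lowNbr1 r ∨ c = lowNbr2 r := by
    rintro c ⟨hc, -⟩ hadj
    obtain ⟨-, hW, hN, hNW⟩ := hr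
    rcases triGrid_adj_iff_s7.mp hadj with rfl | rfl | rfl | rfl | rfl | rfl <;>
      simp_all [lowNbr1, lowNbr2]
  rcases hzt r hr.1 with ⟨-, hSE⟩ | ⟨hS, hSE⟩
  · have hSE' : lowNbr2 r ∈ P \ {r} := ⟨hSE, by simp [lowNbr2, Prod.ext_iff]⟩
    have toSE : ∀ c (hc : c ∈ P \ {r}), triGrid.Adj r c →
        (triGrid.induce (P \ {r})).Reachable ⟨c, hc⟩ ⟨_, hSE'⟩ := by
      intro c hc hadj
      rcases nbr c hc hadj with rfl | rfl | rfl
      · exact SimpleGraph.Adj.reachable (by simp [triGrid_adj_iff_s7, lowNbr2])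
      · exact SimpleGraph.Adj.reachable (by simp [triGrid_adj_iff_s7, lowNbr1, lowNbr2])
      · rfl
    exact (toSE a ha hra).trans (toSE b hb hrb).symm
  · have onlyE : ∀ c ∈ P \ {r}, triGrid.Adj r c → c = (r.1 + 1, r.2) := fun c hc hadj =>
      (nbr c hc hadj).resolve_right (by rintro (rfl | rfl); exacts [hS hc.1, hSE hc.1])
    obtain rfl := onlyE a ha hra
    obtain rfl := onlyE b hb hrb
    rfl

end IsTopLeft

/-- In a final configuration no two distinct particles can both be leaders. -/
theorem at_most_one_leader (P : Set (ℤ × ℤ)) (hfin : P.Finite)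
    (hzt : ZeroOrTwoLower P) (hconn : (triGrid.induce P).Connected)
    (p q : ℤ × ℤ) (hp : IsLeader P p) (hq : IsLeader P q) :
    p = q := by
  obtain ⟨s, rfl⟩ := hfin.exists_finset_coe
  clear hfin
  induction s using Finset.strongInduction generalizing p q with
  | H s ih =>
  obtain ⟨r, hr⟩ := s.finite_toSet.exists_isTopLeft ⟨p, hp.1⟩
  have sole : IsLeader s r → ∀ u ∈ (s : Set (ℤ × ℤ)), u = r := fun hlead u hu =>
    hconn.eq_of_forall_not_adj hr.1 hu (hr.not_adj_of_isLeader hlead)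
  by_cases hpr : p = r
  · subst hpr
    exact (sole hp q hq.1).symm
  by_cases hqr : q = r
  · subst hqr
    exact sole hq p hp.1
  have hdiff : ((s.erase r : Finset (ℤ × ℤ)) : Set (ℤ × ℤ)) = ↑s \ {r} := Finset.coe_erase r s
  refine ih (s.erase r) (Finset.erase_ssubset hr.1) p q ?_ ?_ ?_ ?_ <;> rw [hdiff]
  · exact hr.zeroOrTwoLower_diff hzt
  · exact hr.connected_diff hzt hconn ⟨p, hp.1, hpr⟩
  · exact hp.of_subset Set.sdiff_subset (Set.mem_sdiff_singleton.mpr ⟨hp.1, hpr⟩)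
  · exact hq.of_subset Set.sdiff_subset (Set.mem_sdiff_singleton.mpr ⟨hq.1, hqr⟩)
end
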